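/- Let H be a real Hilbert space with inner product ⟨·,·⟩ and g a second continuous inner product on H whose induced norm is strictly weaker than the Hilbert norm (i.e., g(x,x) ≤ C‖x‖² for some C, but the two norms are not equivalent). Then there exists a continuous linear functional φ ∈ H* that is not representable by g: there is no v ∈ H with φ(w) = g(v, w) for all w ∈ H. Hence the musical map ♭_g : H → H*, v ↦ g(v,·) is not surjective. -/

import Mathlib

/-! If `v ↦ g v ·` were onto `H*`, the open mapping theorem would give every Riesz functional
`⟪x, ·⟫` a `g`-representative `v` with `‖v‖ ≤ K ‖x‖`. Cauchy–Schwarz for `g` then yields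
`‖x‖⁴ = g v x ² ≤ g v v · g x x ≤ C K² ‖x‖² g x x`, i.e. `‖x‖² ≤ C K² g x x`: the two norms would
be equivalent. -/

open Function

lemma exists_continuousLinearMap₂_apply_eq_of_le {E : Type*} [SeminormedAddCommGroup E]
    [NormedSpace ℝ E] (g : E → E → ℝ)
    (hg_symm : ∀ x y, g x y = g y x)
    (hg_add : ∀ x y z, g (x + y) z = g x z + g y z)
    (hg_smul : ∀ (a : ℝ) (x y), g (a • x) y = a * g x y)
    (C : ℝ) (hg_bdd : ∀ x y, g x y ≤ C * ‖x‖ * ‖y‖) :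
    ∃ B : E →L[ℝ] E →L[ℝ] ℝ, ∀ x y, B x y = g x y := by
  let B : E →ₗ[ℝ] E →ₗ[ℝ] ℝ := LinearMap.mk₂ ℝ g hg_add hg_smul
    (fun x y z => by rw [hg_symm, hg_add, hg_symm y, hg_symm z])
    (fun a x y => by rw [hg_symm, hg_smul, hg_symm, smul_eq_mul])
  have hg_neg (x y : E) : g (-x) y = -g x y := by
    simpa using hg_smul (-1) x y
  refine ⟨B.mkContinuous₂ C fun x y => abs_le.2 ⟨neg_le.2 ?_, hg_bdd x y⟩, fun _ _ => rfl⟩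
  simpa [B, hg_neg] using hg_bdd (-x) y

lemma not_exists_sq_norm_le_mul {E : Type*} [SeminormedAddCommGroup E] (q : E → ℝ)
    (hq_nonneg : ∀ x, 0 ≤ q x) (hq_small : ∀ ε : ℝ, 0 < ε → ∃ x : E, ‖x‖ = 1 ∧ q x < ε) :
    ¬∃ c : ℝ, ∀ x, ‖x‖ ^ 2 ≤ c * q x := by
  rintro ⟨c, hc⟩
  obtain ⟨x, hx_norm, hx_small⟩ := hq_small (1 / (|c| + 1)) (by positivity)
  have h_one : 1 ≤ c * q x := by simpa [hx_norm] using hc x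
  have h_lt : (|c| + 1) * q x < 1 := by
    rwa [lt_div_iff₀' (by positivity)] at hx_small
  nlinarith [le_abs_self c, hq_nonneg x]

namespace ContinuousLinearMap

variable {H : Type*} [NormedAddCommGroup H] [InnerProductSpace ℝ H] [CompleteSpace H]

theorem exists_sq_norm_le_mul_apply_self_of_surjective (B : H →L[ℝ] H →L[ℝ] ℝ)
    (hB_nonneg : ∀ x, 0 ≤ B x x) (hB_symm : ∀ x y, B x y = B y x) (hB : Surjective B) :
    ∃ c : ℝ, ∀ x, ‖x‖ ^ 2 ≤ c * B x x := by
  obtain ⟨K, -, hK⟩ := exists_preimage_norm_le B hB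
  refine ⟨‖B‖ * K ^ 2, fun x => ?_⟩
  obtain ⟨v, hv, hv_norm⟩ := hK (innerSL ℝ x)
  rw [innerSL_apply_norm] at hv_norm
  have h_cs : B v x ^ 2 ≤ B v v * B x x :=
    LinearMap.BilinForm.apply_sq_le_of_symm B.toLinearMap₁₂ hB_nonneg ⟨hB_symm⟩ v x
  have h_vv : B v v ≤ ‖B‖ * (K * ‖x‖) ^ 2 :=
    calc B v v ≤ ‖B‖ * ‖v‖ * ‖v‖ := (le_abs_self _).trans (B.le_opNorm₂ v v)
      _ ≤ ‖B‖ * (K * ‖x‖) ^ 2 := by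
        rw [mul_assoc, ← sq]; gcongr
  have h_quartic : ‖x‖ ^ 2 * ‖x‖ ^ 2 ≤ ‖x‖ ^ 2 * (‖B‖ * K ^ 2 * B x x) :=
    calc ‖x‖ ^ 2 * ‖x‖ ^ 2 = B v x ^ 2 := by
          rw [hv, innerSL_apply_apply, real_inner_self_eq_norm_sq]; ring
      _ ≤ B v v * B x x := h_cs
      _ ≤ ‖B‖ * (K * ‖x‖) ^ 2 * B x x := mul_le_mul_of_nonneg_right h_vv (hB_nonneg x)
      _ = ‖x‖ ^ 2 * (‖B‖ * K ^ 2 * B x x) := by ring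
  rcases eq_or_ne x 0 with rfl | hx
  · simp
  · exact le_of_mul_le_mul_left h_quartic (by positivity)

end ContinuousLinearMap

theorem statement16_general
    {H : Type*} [NormedAddCommGroup H] [InnerProductSpace ℝ H] [CompleteSpace H]
    (g : H → H → ℝ)
    (hg_symm : ∀ x y, g x y = g y x)
    (hg_add : ∀ x y z, g (x + y) z = g x z + g y z)
    (hg_smul : ∀ (a : ℝ) (x y), g (a • x) y = a * g x y)
    (hg_pos : ∀ x, 0 ≤ g x x)
    -- continuity: `g` is bounded by the Hilbert norm
    (C : ℝ) (hg_bdd : ∀ x y, g x y ≤ C * ‖x‖ * ‖y‖)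
    -- the norms are not equivalent
    (hg_weak : ∀ ε : ℝ, 0 < ε → ∃ x : H, ‖x‖ = 1 ∧ g x x < ε) :
    ∃ φ : H →L[ℝ] ℝ, ¬∃ v : H, ∀ w : H, φ w = g v w := by
  by_contra! h_rep
  obtain ⟨B, hB⟩ :=
    exists_continuousLinearMap₂_apply_eq_of_le g hg_symm hg_add hg_smul C hg_bdd
  have h_surj : Surjective B := fun φ =>
    let ⟨v, hv⟩ := h_rep φ
    ⟨v, ContinuousLinearMap.ext fun w => (hB v w).trans (hv w).symm⟩
  obtain ⟨c, hc⟩ := B.exists_sq_norm_le_mul_apply_self_of_surjective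
    (by simpa only [hB] using hg_pos) (by simpa only [hB] using hg_symm) h_surj
  exact not_exists_sq_norm_le_mul (fun x => g x x) hg_pos hg_weak
    ⟨c, by simpa only [hB] using hc⟩

/-- If a real Hilbert space carries a second continuous inner product
`g` whose induced norm is strictly weaker than (bounded by, but not equivalent to)
the Hilbert norm, then some continuous linear functional is not representable by
`g`; i.e. the musical map `v ↦ g v ·` is not surjective. -/
theorem statement16
    {H : Type*} [NormedAddCommGroup H] [InnerProductSpace ℝ H] [CompleteSpace H]
    (g : H → H → ℝ)
    (hg_symm : ∀ x y, g x y = g y x)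
    (hg_add : ∀ x y z, g (x + y) z = g x z + g y z)
    (hg_smul : ∀ (a : ℝ) (x y), g (a • x) y = a * g x y)
    (hg_pos : ∀ x, 0 ≤ g x x)
    (hg_def : ∀ x, g x x = 0 → x = 0)
    -- continuity: `g` is bounded by the Hilbert norm
    (C : ℝ) (hg_bdd : ∀ x y, g x y ≤ C * ‖x‖ * ‖y‖)
    -- the norms are not equivalent
    (hg_weak : ∀ ε : ℝ, 0 < ε → ∃ x : H, ‖x‖ = 1 ∧ g x x < ε) :
    ∃ φ : H →L[ℝ] ℝ, ¬∃ v : H, ∀ w : H, φ w = g v w :=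
  statement16_general g hg_symm hg_add hg_smul hg_pos C hg_bdd hg_weak
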